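/- For all s, t ∈ [0,1] one has s·t + Σ_{n=1}^{∞} Σ_{k odd, k ≤ 2^n} S_{k,n}(s)·S_{k,n}(t) = min{s,t}, where the double series converges absolutely. -/

import Mathlib

open MeasureTheory Set Filter

/-- The Haar function `h_{k,n}` (for `n ≥ 1`, `k` odd, `k ≤ 2ⁿ`): it equals `2^{(n-1)/2}` on
`((k-1)·2⁻ⁿ, k·2⁻ⁿ]`, `−2^{(n-1)/2}` on `(k·2⁻ⁿ, (k+1)·2⁻ⁿ]`, and `0` otherwise. -/
noncomputable def haarFn (k n : ℕ) : ℝ → ℝ := fun t =>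
  if ((k : ℝ) - 1) / 2 ^ n < t ∧ t ≤ (k : ℝ) / 2 ^ n then (2 : ℝ) ^ (((n : ℝ) - 1) / 2)
  else if (k : ℝ) / 2 ^ n < t ∧ t ≤ ((k : ℝ) + 1) / 2 ^ n then -((2 : ℝ) ^ (((n : ℝ) - 1) / 2))
  else 0

/-- The Schauder function `S_{k,n}(t) = ∫₀ᵗ h_{k,n}(s) ds`. -/
noncomputable def schauderFn (k n : ℕ) (t : ℝ) : ℝ := ∫ s in (0 : ℝ)..t, haarFn k n s

/-- The odd indices `k ≤ 2ⁿ`. -/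
def oddKs (n : ℕ) : Finset ℕ := (Finset.range (2 ^ n + 1)).filter (fun k => k % 2 = 1)

/-!
Pairing with the indicators of `[0, s]` and `[0, t]`, the partial sum of the series through
level `N` is `⟪E_N 1_[0,s], 1_[0,t]⟫`, where `E_N` averages over the dyadic intervals of
length `2⁻ᴺ`: the Haar functions of level `n + 1` span exactly the range of `E_{n+1} - E_n`.
This pairing is the explicit `dyadicKernel N s t`, which is within `2⁻ᴺ` of `min s t`.
Absolute convergence follows from `|ab| ≤ (a² + b²)/2` and the diagonal case `s = t`, whose
terms are sums of squares.
-/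

open Topology

noncomputable def ramp (u : ℝ) : ℝ := max 0 (min u 1)

/-- The tent `max 0 (1 - |u|)`. -/
noncomputable def hat (u : ℝ) : ℝ := ramp (u + 1) - ramp u

lemma ramp_nonneg (u : ℝ) : 0 ≤ ramp u := le_max_left _ _

lemma ramp_le_one (u : ℝ) : ramp u ≤ 1 := max_le zero_le_one (min_le_right _ _)

lemma ramp_of_mem_Icc {u : ℝ} (hu : u ∈ Set.Icc 0 1) : ramp u = u := by
  rw [ramp, min_eq_left hu.2, max_eq_right hu.1]

lemma ramp_two_mul_add_ramp (u : ℝ) : ramp (2 * u) + ramp (2 * u - 1) = 2 * ramp u := by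
  simp only [ramp, min_def, max_def]
  split_ifs <;> linarith

lemma sum_range_ramp_sub (M : ℕ) (x : ℝ) :
    ∑ j ∈ Finset.range M, ramp (x - j) = max 0 (min x M) := by
  induction M with
  | zero => simp [ramp]
  | succ M ih =>
    rw [Finset.sum_range_succ, ih]
    have := M.cast_nonneg (α := ℝ)
    simp only [ramp, min_def, max_def]
    push_cast
    split_ifs <;> linarith

lemma ramp_mul_one_sub_ramp_le {u v : ℝ} (huv : u ≤ v) :
    ramp u * (1 - ramp v) ≤ ramp u - ramp (u - 1) := by
  simp only [ramp, min_def, max_def]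
  split_ifs <;> nlinarith

lemma haarFn_eq_indicator_sub (k n : ℕ) : haarFn k n = fun t =>
    2 ^ (((n : ℝ) - 1) / 2) *
      ((Ioc (((k : ℝ) - 1) / 2 ^ n) (k / 2 ^ n)).indicator 1 t
        - (Ioc ((k : ℝ) / 2 ^ n) ((k + 1) / 2 ^ n)).indicator 1 t) := by
  funext u
  simp only [haarFn, indicator_apply, Set.mem_Ioc, Pi.one_apply]
  split_ifs with h₁ h₂ <;> first | linarith [h₁.2, h₂.1] | ring

lemma intervalIntegral_indicator_Ioc_one {a b t : ℝ} (ha : 0 ≤ a) (ht : 0 ≤ t) :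
    ∫ x in 0..t, (Ioc a b).indicator 1 x = max 0 (min t b - a) := by
  rw [intervalIntegral.integral_of_le ht, integral_indicator_one measurableSet_Ioc,
    measureReal_restrict_apply measurableSet_Ioc, Set.Ioc_inter_Ioc, Real.volume_real_Ioc,
    max_eq_left ha, max_comm, min_comm]

lemma intervalIntegrable_indicator_Ioc_one (a b t : ℝ) :
    IntervalIntegrable ((Ioc a b).indicator (1 : ℝ → ℝ)) volume 0 t :=
  ((integrableOn_const (by simp)).integrable_indicator
    measurableSet_Ioc).intervalIntegrable

lemma max_zero_min_sub_div {p : ℝ} (hp : 0 < p) (m t : ℝ) :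
    max 0 (min t ((m + 1) / p) - m / p) = ramp (p * t - m) / p := by
  rw [ramp, ← max_div_div_right hp.le, zero_div, ← min_div_div_right hp.le,
    ← min_sub_sub_right]
  congr 2 <;> field_simp; ring

lemma schauderFn_eq_hat {k : ℕ} (n : ℕ) (hk : 1 ≤ k) {t : ℝ} (ht : 0 ≤ t) :
    schauderFn k n t = 2 ^ (((n : ℝ) - 1) / 2) / 2 ^ n * hat (2 ^ n * t - k) := by
  have hp : (0 : ℝ) < 2 ^ n := by positivity
  have hk' : 0 ≤ ((k : ℝ) - 1) / 2 ^ n := div_nonneg (by simpa using hk) hp.le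
  have lower := max_zero_min_sub_div hp ((k : ℝ) - 1) t
  rw [sub_add_cancel] at lower
  rw [schauderFn, haarFn_eq_indicator_sub, intervalIntegral.integral_const_mul,
    intervalIntegral.integral_sub (intervalIntegrable_indicator_Ioc_one _ _ _)
      (intervalIntegrable_indicator_Ioc_one _ _ _),
    intervalIntegral_indicator_Ioc_one hk' ht,
    intervalIntegral_indicator_Ioc_one (by positivity) ht,
    lower, max_zero_min_sub_div hp, hat, sub_add]
  ring

lemma hat_two_mul_sub_one_mul_hat (u v : ℝ) :
    hat (2 * u - 1) * hat (2 * v - 1) =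
      2 * (ramp (2 * u) * ramp (2 * v) + ramp (2 * u - 1) * ramp (2 * v - 1))
        - 4 * (ramp u * ramp v) := by
  have hu := ramp_two_mul_add_ramp u
  have hv := ramp_two_mul_add_ramp v
  simp only [hat, sub_add_cancel]
  linear_combination (-(ramp (2 * v) + ramp (2 * v - 1))) * hu - 2 * ramp u * hv

/-- `ramp (2 ^ N * s - j) / 2 ^ N` is the length of `[0, s] ∩ [j / 2 ^ N, (j + 1) / 2 ^ N]`. -/
noncomputable def dyadicKernel (N : ℕ) (s t : ℝ) : ℝ :=
  (∑ j ∈ Finset.range (2 ^ N), ramp (2 ^ N * s - j) * ramp (2 ^ N * t - j)) / 2 ^ N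

lemma dyadicKernel_zero (s t : ℝ) : dyadicKernel 0 s t = ramp s * ramp t := by
  simp [dyadicKernel]

lemma sum_range_two_mul {M : Type*} [AddCommMonoid M] (f : ℕ → M) (m : ℕ) :
    ∑ i ∈ Finset.range (2 * m), f i =
      ∑ j ∈ Finset.range m, (f (2 * j) + f (2 * j + 1)) := by
  induction m with
  | zero => simp
  | succ m ih =>
    rw [mul_add_one, Finset.sum_range_succ, Finset.sum_range_succ, Finset.sum_range_succ, ih,
      add_assoc]

lemma dyadicKernel_succ_sub (n : ℕ) (s t : ℝ) :
    dyadicKernel (n + 1) s t - dyadicKernel n s t =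
      (∑ j ∈ Finset.range (2 ^ n), hat (2 ^ (n + 1) * s - (2 * j + 1)) *
        hat (2 ^ (n + 1) * t - (2 * j + 1))) / 2 ^ (n + 2) := by
  have odd_arg : ∀ (x : ℝ) (j : ℕ),
      2 * 2 ^ n * x - ((2 * j + 1 : ℕ) : ℝ) = 2 * (2 ^ n * x - j) - 1 :=
    fun x j => by push_cast; ring
  have even_arg : ∀ (x : ℝ) (j : ℕ),
      2 * 2 ^ n * x - ((2 * j : ℕ) : ℝ) = 2 * (2 ^ n * x - j) :=
    fun x j => by push_cast; ring
  have hat_arg : ∀ (x : ℝ) (j : ℕ), 2 * 2 ^ n * x - (2 * j + 1) = 2 * (2 ^ n * x - j) - 1 :=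
    fun x j => by ring
  simp only [dyadicKernel, pow_succ', sum_range_two_mul, odd_arg, even_arg, hat_arg,
    hat_two_mul_sub_one_mul_hat, Finset.sum_sub_distrib, ← Finset.mul_sum]
  field_simp
  ring

lemma oddKs_succ (n : ℕ) : oddKs (n + 1) = (Finset.range (2 ^ n)).image (fun j => 2 * j + 1) := by
  ext k
  simp only [oddKs, Finset.mem_filter, Finset.mem_range, Finset.mem_image, pow_succ]
  constructor
  · rintro ⟨hk, hodd⟩
    exact ⟨k / 2, by omega, by omega⟩
  · rintro ⟨j, hj, rfl⟩
    omega

noncomputable def schauderLevelSum (n : ℕ) (s t : ℝ) : ℝ :=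
  ∑ k ∈ oddKs n, schauderFn k n s * schauderFn k n t

lemma two_rpow_half_sub_one_mul_self (n : ℕ) :
    (2 : ℝ) ^ (((n : ℝ) - 1) / 2) * 2 ^ (((n : ℝ) - 1) / 2) = 2 ^ n / 2 := by
  rw [← Real.rpow_add two_pos, add_halves, Real.rpow_sub_one two_ne_zero, Real.rpow_natCast]

lemma schauderLevelSum_succ {s t : ℝ} (hs : 0 ≤ s) (ht : 0 ≤ t) (n : ℕ) :
    schauderLevelSum (n + 1) s t = dyadicKernel (n + 1) s t - dyadicKernel n s t := by
  rw [dyadicKernel_succ_sub, schauderLevelSum, oddKs_succ,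
    Finset.sum_image fun _ _ _ _ h => by omega, Finset.sum_div]
  refine Finset.sum_congr rfl fun j _ => ?_
  rw [schauderFn_eq_hat _ (by omega) hs, schauderFn_eq_hat _ (by omega) ht,
    mul_mul_mul_comm, div_mul_div_comm, two_rpow_half_sub_one_mul_self]
  push_cast
  field_simp
  ring

lemma sum_range_schauderLevelSum {s t : ℝ} (hs : 0 ≤ s) (ht : 0 ≤ t) (N : ℕ) :
    ∑ n ∈ Finset.range N, schauderLevelSum (n + 1) s t =
      dyadicKernel N s t - ramp s * ramp t := by
  rw [← dyadicKernel_zero]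
  simp only [schauderLevelSum_succ hs ht]
  exact Finset.sum_range_sub (fun N => dyadicKernel N s t) N

/-- For `x ≤ y` the defect `∑ ramp (x - j) * (1 - ramp (y - j))` is dominated termwise by the
telescoping sum `∑ (ramp (x - j) - ramp (x - j - 1))`. -/
lemma abs_sum_range_ramp_mul_ramp_sub_le (M : ℕ) (x y : ℝ) :
    |∑ j ∈ Finset.range M, ramp (x - j) * ramp (y - j) - max 0 (min (min x y) M)| ≤ 1 := by
  wlog hxy : x ≤ y generalizing x y
  · rw [min_comm x y]
    simpa only [mul_comm] using this y x (le_of_not_ge hxy)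
  rw [min_eq_left hxy, ← sum_range_ramp_sub, ← neg_sub, abs_neg, ← Finset.sum_sub_distrib]
  have hterm : ∀ j : ℕ, ramp (x - j) - ramp (x - j) * ramp (y - j) ≤
      ramp (x - j) - ramp (x - ↑(j + 1)) := fun j => by
    rw [← mul_one_sub, Nat.cast_succ, ← sub_sub]
    exact ramp_mul_one_sub_ramp_le (by linarith)
  have lower : 0 ≤ ∑ j ∈ Finset.range M, (ramp (x - j) - ramp (x - j) * ramp (y - j)) :=
    Finset.sum_nonneg fun j _ => by
      rw [← mul_one_sub]; exact mul_nonneg (ramp_nonneg _) (sub_nonneg.2 (ramp_le_one _))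
  have upper := (Finset.sum_le_sum fun j (_ : j ∈ Finset.range M) => hterm j).trans_eq
    (Finset.sum_range_sub' (fun j : ℕ => ramp (x - j)) M)
  rw [abs_le]
  constructor <;> linarith [ramp_le_one (x - (0 : ℕ)), ramp_nonneg (x - M)]

lemma abs_dyadicKernel_sub_min_le {s t : ℝ} (hs : s ∈ Set.Icc 0 1) (ht : t ∈ Set.Icc 0 1)
    (N : ℕ) :
    |dyadicKernel N s t - min s t| ≤ 1 / 2 ^ N := by
  have hp : (0 : ℝ) < 2 ^ N := by positivity
  have hclamp :
      max 0 (min (min (2 ^ N * s) (2 ^ N * t)) ((2 ^ N : ℕ) : ℝ)) = 2 ^ N * min s t := by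
    rw [← mul_min_of_nonneg _ _ hp.le, Nat.cast_pow, Nat.cast_ofNat,
      min_eq_left (mul_le_of_le_one_right hp.le (min_le_of_left_le hs.2)),
      max_eq_right (mul_nonneg hp.le (le_min hs.1 ht.1))]
  have bound := abs_sum_range_ramp_mul_ramp_sub_le (2 ^ N) (2 ^ N * s) (2 ^ N * t)
  rw [hclamp] at bound
  rw [dyadicKernel, div_sub' hp.ne', abs_div, abs_of_pos hp]
  exact div_le_div_of_nonneg_right bound hp.le

lemma tendsto_dyadicKernel {s t : ℝ} (hs : s ∈ Set.Icc 0 1) (ht : t ∈ Set.Icc 0 1) :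
    Tendsto (fun N => dyadicKernel N s t) atTop (𝓝 (min s t)) := by
  refine tendsto_iff_dist_tendsto_zero.2 (squeeze_zero (fun _ => dist_nonneg)
    (fun N => abs_dyadicKernel_sub_min_le hs ht N) ?_)
  simpa only [one_div, inv_pow] using
    tendsto_pow_atTop_nhds_zero_of_lt_one (by norm_num : (0 : ℝ) ≤ 2⁻¹) (by norm_num)

lemma tendsto_sum_range_schauderLevelSum {s t : ℝ} (hs : s ∈ Set.Icc 0 1)
    (ht : t ∈ Set.Icc 0 1) :
    Tendsto (fun N => ∑ n ∈ Finset.range N, schauderLevelSum (n + 1) s t) atTop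
      (𝓝 (min s t - s * t)) := by
  simp only [sum_range_schauderLevelSum hs.1 ht.1, ramp_of_mem_Icc hs, ramp_of_mem_Icc ht]
  exact (tendsto_dyadicKernel hs ht).sub_const _

lemma hasSum_schauderLevelSum_self {s : ℝ} (hs : s ∈ Set.Icc 0 1) :
    HasSum (fun n => schauderLevelSum (n + 1) s s) (s - s * s) := by
  have partial_sums := tendsto_sum_range_schauderLevelSum hs hs
  rw [min_self] at partial_sums
  exact (hasSum_iff_tendsto_nat_of_nonneg
    (fun n => Finset.sum_nonneg fun _ _ => mul_self_nonneg _) _).2 partial_sums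

lemma summable_sum_abs_schauderFn_mul {s t : ℝ} (hs : s ∈ Set.Icc 0 1)
    (ht : t ∈ Set.Icc 0 1) :
    Summable fun n : ℕ =>
      ∑ k ∈ oddKs (n + 1), |schauderFn k (n + 1) s * schauderFn k (n + 1) t| := by
  refine Summable.of_nonneg_of_le (fun n => Finset.sum_nonneg fun _ _ => abs_nonneg _)
    (fun n => ?_)
    (((hasSum_schauderLevelSum_self hs).add (hasSum_schauderLevelSum_self ht)).summable.div_const 2)
  rw [schauderLevelSum, schauderLevelSum, ← Finset.sum_add_distrib, Finset.sum_div]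
  refine Finset.sum_le_sum fun k _ => ?_
  have amgm := two_mul_le_add_sq |schauderFn k (n + 1) s| |schauderFn k (n + 1) t|
  rw [sq_abs, sq_abs, sq, sq, mul_assoc, ← abs_mul] at amgm
  linarith

lemma hasSum_schauderLevelSum {s t : ℝ} (hs : s ∈ Set.Icc 0 1) (ht : t ∈ Set.Icc 0 1) :
    HasSum (fun n => schauderLevelSum (n + 1) s t) (min s t - s * t) := by
  have summable : Summable fun n => schauderLevelSum (n + 1) s t :=
    (summable_sum_abs_schauderFn_mul hs ht).of_norm_bounded fun n => Finset.abs_sum_le_sum_abs _ _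
  exact (summable.hasSum_iff_tendsto_nat).2 (tendsto_sum_range_schauderLevelSum hs ht)

/-- Parseval identity for the Haar system: for all `s, t ∈ [0,1]`,
`s·t + Σ_{n≥1} Σ_{k odd, k ≤ 2ⁿ} S_{k,n}(s)·S_{k,n}(t) = min{s,t}`, the double series
converging absolutely. -/
theorem schauder_parseval (s t : ℝ) (hs : s ∈ Set.Icc (0 : ℝ) 1) (ht : t ∈ Set.Icc (0 : ℝ) 1) :
    Summable (fun n : ℕ =>
      ∑ k ∈ oddKs (n + 1), |schauderFn k (n + 1) s * schauderFn k (n + 1) t|) ∧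
    s * t + ∑' n : ℕ, ∑ k ∈ oddKs (n + 1), schauderFn k (n + 1) s * schauderFn k (n + 1) t
      = min s t := by
  refine ⟨summable_sum_abs_schauderFn_mul hs ht, ?_⟩
  have tsum_eq := (hasSum_schauderLevelSum hs ht).tsum_eq
  unfold schauderLevelSum at tsum_eq
  rw [tsum_eq]
  ring
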